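/- arXiv:2109.00700 — 5 statements merged into one kernel-verified Lean document; each statement's English description precedes it below -/
import Mathlib

section
/- Let H be an n×n unreduced lower Hessenberg matrix with associated polynomial sequence {q_i}_{0≤i≤n}. If λ is an eigenvalue of H, then λ is a root of q_n. -/
open Polynomial Matrix

/-- Entry of a matrix viewed with natural-number (0-based) indices; `0` out of range. -/
def entryR {n : ℕ} (H : Matrix (Fin n) (Fin n) ℝ) (i j : ℕ) : ℝ :=
  if h : i < n ∧ j < n then H ⟨i, h.1⟩ ⟨j, h.2⟩ else 0

/-- `H` is an unreduced lower Hessenberg matrix: entries above the superdiagonal vanish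
and the superdiagonal entries are nonzero. -/
def IsUnreducedLowerHessenberg {n : ℕ} (H : Matrix (Fin n) (Fin n) ℝ) : Prop :=
  (∀ i j : ℕ, i + 1 < j → entryR H i j = 0) ∧
  (∀ i : ℕ, i + 1 < n → entryR H i (i + 1) ≠ 0)

/-- `q` is the polynomial sequence associated with the unreduced lower Hessenberg matrix `H`:
`q 0 = 1` and `h_{i,i+1} q_{i+1} = X q_i - ∑_{j ≤ i} h_{i j} q_j` (0-based indices),
with the convention that the superdiagonal entry of the last row is `1`. -/
def IsAssocPolySeq {n : ℕ} (H : Matrix (Fin n) (Fin n) ℝ) (q : ℕ → Polynomial ℝ) : Prop :=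
  q 0 = 1 ∧
  ∀ i : ℕ, i < n →
    Polynomial.C (if i + 1 = n then 1 else entryR H i (i + 1)) * q (i + 1) =
      Polynomial.X * q i - ∑ j ∈ Finset.range (i + 1), Polynomial.C (entryR H i j) * q j

/- Proof idea: for an eigenvector `v`, the first `n - 1` rows of `H v = λ v` can be solved one
after the other for `v_{k+1}` (the superdiagonal entries are nonzero), and they are solved by the
same recurrence as the `q_k`; hence `v_k = v_0 q_k(λ)`, with `v_0 ≠ 0`. The last row then reads
`v_0 q_n(λ) = 0`. -/

theorem sum_range_entryR_mul_extend {n : ℕ} (H : Matrix (Fin n) (Fin n) ℝ) (v : Fin n → ℝ)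
    (i : Fin n) :
    ∑ j ∈ Finset.range n, entryR H i j * Function.extend Fin.val v 0 j = (H *ᵥ v) i := by
  rw [← Fin.sum_univ_eq_sum_range]
  simp [entryR, Fin.val_injective.extend_apply, mulVec, dotProduct]

theorem sum_range_entryR_mul_of_zero_above {n : ℕ} {H : Matrix (Fin n) (Fin n) ℝ}
    (hzero : ∀ i j : ℕ, i + 1 < j → entryR H i j = 0) (u : ℕ → ℝ) {i : ℕ} (hi : i + 1 < n) :
    ∑ j ∈ Finset.range n, entryR H i j * u j =
      ∑ j ∈ Finset.range (i + 1), entryR H i j * u j + entryR H i (i + 1) * u (i + 1) := by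
  rw [← Finset.sum_range_succ]
  refine (Finset.sum_subset (Finset.range_subset_range.mpr hi) fun j hj hj' => ?_).symm
  simp only [Finset.mem_range] at hj hj'
  rw [hzero i j (by omega), zero_mul]

theorem IsAssocPolySeq.eval_succ {n : ℕ} {H : Matrix (Fin n) (Fin n) ℝ} {q : ℕ → ℝ[X]}
    (hq : IsAssocPolySeq H q) (x : ℝ) {i : ℕ} (hi : i < n) :
    (if i + 1 = n then 1 else entryR H i (i + 1)) * (q (i + 1)).eval x =
      x * (q i).eval x - ∑ j ∈ Finset.range (i + 1), entryR H i j * (q j).eval x := by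
  simpa [eval_finsetSum] using congrArg (eval x) (hq.2 i hi)

namespace IsUnreducedLowerHessenberg

variable {n : ℕ} {H : Matrix (Fin n) (Fin n) ℝ} {q : ℕ → ℝ[X]} {u : ℕ → ℝ} {x : ℝ}

theorem eq_mul_eval (hH : IsUnreducedLowerHessenberg H) (hq : IsAssocPolySeq H q)
    (hrow : ∀ i, i + 1 < n → ∑ j ∈ Finset.range n, entryR H i j * u j = x * u i) :
    ∀ k < n, u k = u 0 * (q k).eval x := by
  intro k
  induction k using Nat.strong_induction_on with
  | _ k ih =>
    intro hk
    cases k with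
    | zero => simp [hq.1]
    | succ k =>
      have hrowk := hrow k hk
      rw [sum_range_entryR_mul_of_zero_above hH.1 u hk] at hrowk
      have hrec := hq.eval_succ x (Nat.lt_of_succ_lt hk)
      rw [if_neg hk.ne] at hrec
      have hsum : ∑ j ∈ Finset.range (k + 1), entryR H k j * u j =
          u 0 * ∑ j ∈ Finset.range (k + 1), entryR H k j * (q j).eval x := by
        rw [Finset.mul_sum]
        refine Finset.sum_congr rfl fun j hj => ?_
        rw [ih j (Finset.mem_range.mp hj) (by simp only [Finset.mem_range] at hj; omega)]
        ring
      apply mul_left_cancel₀ (hH.2 k hk)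
      linear_combination hrowk - hsum + x * ih k k.lt_succ_self (Nat.lt_of_succ_lt hk)
        - u 0 * hrec

theorem mul_eval_eq_zero (hH : IsUnreducedLowerHessenberg H) (hq : IsAssocPolySeq H q)
    (hn : 0 < n) (hrow : ∀ i < n, ∑ j ∈ Finset.range n, entryR H i j * u j = x * u i) :
    u 0 * (q n).eval x = 0 := by
  obtain ⟨m, rfl⟩ : ∃ m, n = m + 1 := ⟨n - 1, by omega⟩
  have hu := hH.eq_mul_eval hq fun i hi => hrow i (by omega)
  have hrec := hq.eval_succ x (lt_add_one m)
  rw [if_pos rfl, one_mul] at hrec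
  have hsum : ∑ j ∈ Finset.range (m + 1), entryR H m j * u j =
      u 0 * ∑ j ∈ Finset.range (m + 1), entryR H m j * (q j).eval x := by
    rw [Finset.mul_sum]
    refine Finset.sum_congr rfl fun j hj => ?_
    rw [hu j (Finset.mem_range.mp hj)]
    ring
  linear_combination u 0 * hrec - hrow m (lt_add_one m) + hsum - x * hu m (lt_add_one m)

end IsUnreducedLowerHessenberg

/-- every eigenvalue of `H` is a root of `q n`. -/
theorem eigenvalue_is_root {n : ℕ} (H : Matrix (Fin n) (Fin n) ℝ)
    (hH : IsUnreducedLowerHessenberg H) (q : ℕ → Polynomial ℝ)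
    (hq : IsAssocPolySeq H q) (lam : ℝ)
    (hlam : Module.End.HasEigenvalue (Matrix.toLin' H) lam) :
    (q n).eval lam = 0 := by
  obtain ⟨v, hv⟩ := hlam.exists_hasEigenvector
  set u : ℕ → ℝ := Function.extend Fin.val v 0
  have hrow : ∀ i < n, ∑ j ∈ Finset.range n, entryR H i j * u j = lam * u i := fun i hi => by
    have hmul : H *ᵥ v = lam • v := by simpa [toLin'_apply] using hv.apply_eq_smul
    rw [show u i = v ⟨i, hi⟩ from Fin.val_injective.extend_apply v 0 ⟨i, hi⟩]
    simpa [hmul] using sum_range_entryR_mul_extend H v ⟨i, hi⟩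
  have hu := hH.eq_mul_eval hq fun i hi => hrow i (by omega)
  have hu0 : u 0 ≠ 0 := fun h0 => hv.2 <| funext fun i => by
    simpa [u, h0, Fin.val_injective.extend_apply] using hu i i.is_lt
  have hn : 0 < n := Nat.pos_of_ne_zero fun h => by subst h; exact hv.2 (Subsingleton.elim _ _)
  exact (mul_eq_zero.mp (hH.mul_eval_eq_zero hq hn hrow)).resolve_left hu0
end

section
/- Let H be an n×n real unreduced lower Hessenberg matrix with associated polynomial sequence {q_i}_{0≤i≤n}. If all roots of q_n are simple (i.e., q_n has n distinct complex roots), then the characteristic polynomial of H equals ρ q_n(x), where ρ = Π_{i=1}^{n-1} h_{i,i+1}. -/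
open Polynomial Matrix

/-- if all (complex) roots of `q n` are simple, i.e. `q n` has `n`
distinct complex roots, then the characteristic polynomial of `H` equals
`ρ q_n` with `ρ = ∏_{i} h_{i,i+1}` the product of superdiagonal entries. -/
theorem charpoly_eq_rho_qn {n : ℕ} (H : Matrix (Fin n) (Fin n) ℝ)
    (hH : IsUnreducedLowerHessenberg H) (q : ℕ → Polynomial ℝ)
    (hq : IsAssocPolySeq H q)
    (hsimple : ((q n).map (algebraMap ℝ ℂ)).roots.toFinset.card = n) :
    Matrix.charpoly H =
      Polynomial.C (∏ i ∈ Finset.range (n - 1), entryR H i (i + 1)) * q n := by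
  obtain ⟨hq0, hrec⟩ := hq
  obtain ⟨hup, _⟩ := hH
  match n with
  | 0 =>
      simp [Matrix.charpoly, Matrix.det_fin_zero, hq0]
  | m + 1 =>
      set M : Matrix (Fin (m+1)) (Fin (m+1)) ℝ[X] := charmatrix H with hM
      set v : Fin (m+1) → ℝ[X] := fun i => q i with hv
      have hentry : ∀ i j : Fin (m+1), entryR H i j = H i j := by
        intro i j
        simp [entryR, i.isLt, j.isLt]
      -- the key vector identity
      have hMv : M *ᵥ v = fun i => if i = Fin.last m then q (m+1) else 0 := by
        funext i
        have h1 : (M *ᵥ v) i = X * q i - ∑ j : Fin (m+1), C (H i j) * q (j : ℕ) := by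
          simp only [hM, hv, mulVec, dotProduct, charmatrix_apply, sub_mul,
            Finset.sum_sub_distrib, Matrix.diagonal_apply, ite_mul, zero_mul]
          rw [Finset.sum_ite_eq]
          simp
        have h2 : ∑ j : Fin (m+1), C (H i j) * q (j : ℕ)
            = ∑ j ∈ Finset.range (m+1), C (entryR H i j) * q j := by
          rw [Finset.sum_range fun j => C (entryR H (i:ℕ) j) * q j]
          apply Finset.sum_congr rfl
          intro j _
          congr 1
          rw [hentry]
        by_cases hi : (i : ℕ) = m
        · have hil : i = Fin.last m := Fin.ext hi
          rw [if_pos hil, h1, h2, hi]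
          have := hrec m (Nat.lt_succ_self m)
          rw [if_pos rfl] at this
          rw [Polynomial.C_1, one_mul] at this
          linear_combination -this
        · rw [if_neg (fun h => hi (by rw [h]; rfl)), h1, h2]
          have hilt : (i : ℕ) + 1 < m + 1 := by
            have := i.isLt
            omega
          have hsub : ∑ j ∈ Finset.range (m+1), C (entryR H i j) * q j
              = ∑ j ∈ Finset.range ((i:ℕ)+2), C (entryR H i j) * q j := by
            refine (Finset.sum_subset ?_ ?_).symm
            · intro x hx
              simp only [Finset.mem_range] at hx ⊢
              omega
            · intro x _ hx
              simp only [Finset.mem_range, not_lt] at hx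
              rw [hup i x (by omega)]
              simp
          rw [hsub, Finset.sum_range_succ]
          have := hrec i (by omega)
          rw [if_neg (by omega)] at this
          linear_combination -this
      -- Cramer's rule at index 0
      have h0 : M.det = (M.updateCol 0 (M *ᵥ v)).det := by
        have hdet : M.det • v = cramer M (M *ᵥ v) := by
          rw [cramer_eq_adjugate_mulVec, mulVec_mulVec, adjugate_mul,
            smul_mulVec, one_mulVec]
        have h := congrFun hdet 0
        simp only [Pi.smul_apply, smul_eq_mul, cramer_apply, hv, Fin.val_zero, hq0,
          mul_one] at h
        exact h
      -- compute the determinant with the updated column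
      rw [show Matrix.charpoly H = M.det from rfl, h0, hMv,
        Matrix.det_succ_column_zero, Finset.sum_eq_single (Fin.last m)]
      · rw [Matrix.updateCol_self, if_pos rfl]
        have hsubm : ((M.updateCol 0 (fun i => if i = Fin.last m then q (m+1) else 0)).submatrix
              (Fin.last m).succAbove Fin.succ)
            = fun (a b : Fin m) => M (Fin.castSucc a) (Fin.succ b) := by
          funext a b
          simp [Matrix.submatrix_apply, Fin.succAbove_last,
            Matrix.updateCol_ne (Fin.succ_ne_zero b)]
        rw [hsubm]
        have hlt : Matrix.BlockTriangular
            (fun (a b : Fin m) => M (Fin.castSucc a) (Fin.succ b)) OrderDual.toDual := by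
          intro a b hab
          have hab' : (a : ℕ) < (b : ℕ) := hab
          have hne : Fin.castSucc a ≠ Fin.succ b := by
            intro h
            have : (a : ℕ) = (b : ℕ) + 1 := by
              simpa [Fin.ext_iff] using h
            omega
          show M (Fin.castSucc a) (Fin.succ b) = 0
          rw [hM, charmatrix_apply_ne H _ _ hne, ← hentry,
            hup _ _ (by simp only [Fin.coe_castSucc, Fin.val_succ]; omega)]
          simp
        rw [Matrix.det_of_lowerTriangular _ hlt]
        have hdiag : ∀ a : Fin m, M (Fin.castSucc a) (Fin.succ a)
            = -C (entryR H (a:ℕ) ((a:ℕ)+1)) := by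
          intro a
          have hne : Fin.castSucc a ≠ Fin.succ a := by
            intro h
            simp [Fin.ext_iff] at h
          rw [hM, charmatrix_apply_ne H _ _ hne, ← hentry]
          rfl
        have hprod : ∏ a : Fin m, M (Fin.castSucc a) (Fin.succ a)
            = (-1)^m * C (∏ i ∈ Finset.range m, entryR H i (i+1)) := by
          rw [Finset.prod_congr rfl (fun a _ => hdiag a)]
          rw [Finset.prod_congr rfl
            (fun (a : Fin m) _ => show -C (entryR H (a:ℕ) ((a:ℕ)+1))
              = (-1) * C (entryR H (a:ℕ) ((a:ℕ)+1)) by ring)]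
          rw [Finset.prod_mul_distrib, Finset.prod_const, Finset.card_univ, Fintype.card_fin,
            ← map_prod (C : ℝ →+* ℝ[X]),
            Fin.prod_univ_eq_prod_range (fun i => entryR H i (i+1)) m]
        rw [hprod, Fin.val_last]
        have hpow : ((-1 : ℝ[X])^m) * ((-1:ℝ[X])^m) = 1 := by
          rw [← pow_add]
          exact Even.neg_one_pow ⟨m, rfl⟩
        simp only [Nat.add_sub_cancel]
        linear_combination q (m+1) * C (∏ i ∈ Finset.range m, entryR H i (i+1)) * hpow
      · intro b _ hb
        rw [Matrix.updateCol_self, if_neg hb]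
        ring
      · intro h
        exact absurd (Finset.mem_univ _) h
end

section
/- Let H be an n×n real unreduced lower Hessenberg matrix. H is diagonalizable over the reals if and only if all eigenvalues of H are real and distinct. -/
open Polynomial Matrix

/-- `H` is diagonalizable over the reals. -/
def RealDiagonalizable {n : ℕ} (H : Matrix (Fin n) (Fin n) ℝ) : Prop :=
  ∃ P D : Matrix (Fin n) (Fin n) ℝ, IsUnit P.det ∧ D.IsDiag ∧ H = P * D * P⁻¹

/-!
Row `i` of `H x = μ x` involves only `x₀, …, x_{i+1}`, and `x_{i+1}` with the nonzero
coefficient `h_{i,i+1}`; so an eigenvector is determined by its first coordinate and every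
eigenspace of an unreduced Hessenberg matrix is at most a line. Hence the `n` independent
eigenvectors given by a diagonalization have pairwise distinct eigenvalues, and these are the
roots of the characteristic polynomial. Conversely, `n` distinct eigenvalues of any matrix
give `n` independent eigenvectors, which form an eigenbasis.
-/

namespace IsUnreducedLowerHessenberg

variable {n : ℕ} {H : Matrix (Fin n) (Fin n) ℝ}

theorem apply_eq_zero (hH : IsUnreducedLowerHessenberg H) {i j : Fin n}
    (hij : (i : ℕ) + 1 < j) : H i j = 0 := by
  simpa [entryR] using hH.1 i j hij

theorem apply_succ_ne_zero (hH : IsUnreducedLowerHessenberg H) {i : ℕ} (hi : i + 1 < n) :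
    H ⟨i, by omega⟩ ⟨i + 1, hi⟩ ≠ 0 := by
  simpa [entryR, hi, show i < n by omega] using hH.2 i hi

theorem eq_zero_of_mulVec_eq_smul (hH : IsUnreducedLowerHessenberg H) {μ : ℝ}
    {x : Fin n → ℝ} (hx : H *ᵥ x = μ • x) (h₀ : ∀ h : 0 < n, x ⟨0, h⟩ = 0) : x = 0 := by
  suffices ∀ k (hk : k < n), x ⟨k, hk⟩ = 0 from funext fun i => this i i.2
  intro k
  induction k using Nat.strong_induction_on with
  | _ k ih =>
    cases k with
    | zero => exact h₀
    | succ m =>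
      intro hk
      have hm : m < n := by omega
      have hsum : ∑ j, H ⟨m, hm⟩ j * x j = H ⟨m, hm⟩ ⟨m + 1, hk⟩ * x ⟨m + 1, hk⟩ := by
        refine Finset.sum_eq_single _ (fun j _ hj => ?_) (by simp)
        rcases lt_or_gt_of_ne (Fin.val_ne_of_ne hj) with hlt | hgt
        · rw [ih j hlt, mul_zero]
        · rw [hH.apply_eq_zero hgt, zero_mul]
      have hrow : H ⟨m, hm⟩ ⟨m + 1, hk⟩ * x ⟨m + 1, hk⟩ = 0 := by
        rw [← hsum, ← smul_zero μ, ← ih m (by omega) hm]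
        exact congrFun hx ⟨m, hm⟩
      exact (mul_eq_zero.mp hrow).resolve_left (hH.apply_succ_ne_zero hk)

theorem finrank_eigenspace_le_one (hH : IsUnreducedLowerHessenberg H) (μ : ℝ) :
    Module.finrank ℝ (Module.End.eigenspace (toLin' H) μ) ≤ 1 := by
  rcases Nat.eq_zero_or_pos n with rfl | hn
  · exact (Submodule.finrank_le _).trans (by simp)
  let head : Module.End.eigenspace (toLin' H) μ →ₗ[ℝ] ℝ :=
    (LinearMap.proj ⟨0, hn⟩).comp (Submodule.subtype _)
  have : Function.Injective head := by
    rw [← LinearMap.ker_eq_bot, LinearMap.ker_eq_bot']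
    intro x hx
    have hx' : H *ᵥ x = μ • x := by
      simpa [toLin'_apply] using Module.End.mem_eigenspace_iff.mp x.2
    exact Subtype.ext (hH.eq_zero_of_mulVec_eq_smul hx' fun _ => hx)
  simpa using LinearMap.finrank_le_finrank_of_injective this

end IsUnreducedLowerHessenberg

theorem Module.End.injective_of_finrank_eigenspace_le_one {K V ι : Type*} [Field K]
    [AddCommGroup V] [Module K V] [FiniteDimensional K V] {f : Module.End K V}
    (hf : ∀ μ, Module.finrank K (f.eigenspace μ) ≤ 1) {v : ι → V} (hv : LinearIndependent K v)
    {d : ι → K} (hd : ∀ i, v i ∈ f.eigenspace (d i)) : Function.Injective d := by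
  intro i j hij
  by_contra hne
  have hpair : LinearIndependent K (v ∘ ![i, j]) :=
    hv.comp _ fun a b => by fin_cases a <;> fin_cases b <;> simp [hne, Ne.symm hne]
  have hspan : Submodule.span K (Set.range (v ∘ ![i, j])) ≤ f.eigenspace (d i) := by
    rw [Submodule.span_le, Set.range_subset_iff]
    intro a
    fin_cases a
    · exact hd i
    · simpa [hij] using hd j
  have := (finrank_span_eq_card hpair).symm.trans_le
    ((Submodule.finrank_mono hspan).trans (hf (d i)))
  simp at this

namespace Matrix

variable {ι : Type*} [Fintype ι] [DecidableEq ι]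

section CommRing

variable {R : Type*} [CommRing R]

theorem mul_eq_mul_diagonal_iff (M P : Matrix ι ι R) (d : ι → R) :
    M * P = P * diagonal d ↔ ∀ j, M *ᵥ P.col j = d j • P.col j := by
  simp only [← Matrix.ext_iff, mul_diagonal]
  simp only [funext_iff, mul_apply, col, mulVec, dotProduct, Pi.smul_apply, smul_eq_mul,
    transpose_apply, mul_comm (d _)]
  exact forall_comm

theorem eq_mul_diagonal_mul_inv_iff {M P : Matrix ι ι R} (hP : IsUnit P) (d : ι → R) :
    M = P * diagonal d * P⁻¹ ↔ ∀ j, M *ᵥ P.col j = d j • P.col j := by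
  have hdet := (isUnit_iff_isUnit_det P).mp hP
  rw [← mul_eq_mul_diagonal_iff]
  constructor
  · rintro rfl
    rw [mul_assoc, nonsing_inv_mul P hdet, mul_one]
  · intro h
    rw [← h, mul_assoc, mul_nonsing_inv P hdet, mul_one]

theorem charpoly_mul_mul_inv (M : Matrix ι ι R) {P : Matrix ι ι R} (hP : IsUnit P.det) :
    (P * M * P⁻¹).charpoly = M.charpoly :=
  charpoly_units_conj (nonsingInvUnit P hP) M

theorem roots_charpoly_diagonal_toFinset [IsDomain R] [DecidableEq R] (d : ι → R) :
    (charpoly (diagonal d)).roots.toFinset = Finset.univ.image d := by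
  have : ∏ i, (X - C (d i)) = ((Finset.univ.val.map d).map (X - C ·)).prod := by
    rw [Multiset.map_map]; rfl
  rw [charpoly_diagonal, this, roots_multiset_prod_X_sub_C]
  rfl

end CommRing

section Field

variable {K : Type*} [Field K]

theorem injective_of_finrank_eigenspace_le_one {M P : Matrix ι ι K} {d : ι → K}
    (hM : ∀ μ, Module.finrank K (Module.End.eigenspace (toLin' M) μ) ≤ 1) (hP : IsUnit P)
    (hMP : M = P * diagonal d * P⁻¹) : Function.Injective d :=
  Module.End.injective_of_finrank_eigenspace_le_one hM (linearIndependent_cols_of_isUnit hP)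
    fun j => Module.End.mem_eigenspace_iff.mpr <| by
      rw [toLin'_apply]; exact (eq_mul_diagonal_mul_inv_iff hP d).mp hMP j

theorem exists_eq_mul_diagonal_mul_inv_of_card_roots_charpoly [DecidableEq K]
    {M : Matrix ι ι K} (hM : M.charpoly.roots.toFinset.card = Fintype.card ι) :
    ∃ (P : Matrix ι ι K) (d : ι → K), IsUnit P ∧ M = P * diagonal d * P⁻¹ := by
  let e : ι ≃ M.charpoly.roots.toFinset := Fintype.equivOfCardEq (by simpa using hM.symm)
  let d : ι → K := fun i => e i
  have hd : Function.Injective d := Subtype.val_injective.comp e.injective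
  have hroot : ∀ i, Module.End.HasEigenvalue (toLin' M) (d i) := fun i => by
    rw [Module.End.hasEigenvalue_iff_isRoot_charpoly, charpoly_toLin']
    exact (mem_roots'.mp (Multiset.mem_toFinset.mp (e i).2)).2
  choose v hv using fun i => (hroot i).exists_hasEigenvector
  let P : Matrix ι ι K := of fun i j => v j i
  have hP : IsUnit P := linearIndependent_cols_iff_isUnit.mp
    (Module.End.eigenvectors_linearIndependent' _ d hd v hv)
  refine ⟨P, d, hP, (eq_mul_diagonal_mul_inv_iff hP d).mpr fun j => ?_⟩
  rw [← toLin'_apply]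
  exact (hv j).apply_eq_smul

end Field

end Matrix

/-- an unreduced lower Hessenberg matrix is real diagonalizable iff all
its eigenvalues are real and distinct, i.e. iff its (monic, degree `n`) characteristic
polynomial has `n` distinct real roots. -/
theorem realDiagonalizable_iff_distinct_real_eigenvalues {n : ℕ}
    (H : Matrix (Fin n) (Fin n) ℝ) (hH : IsUnreducedLowerHessenberg H) :
    RealDiagonalizable H ↔ (Matrix.charpoly H).roots.toFinset.card = n := by
  constructor
  · rintro ⟨P, D, hP, hD, rfl⟩
    rw [← hD.diagonal_diag] at hH ⊢
    have hd := injective_of_finrank_eigenspace_le_one hH.finrank_eigenspace_le_one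
      ((isUnit_iff_isUnit_det P).mpr hP) rfl
    rw [charpoly_mul_mul_inv _ hP, roots_charpoly_diagonal_toFinset,
      Finset.card_image_of_injective _ hd, Finset.card_fin]
  · intro h
    obtain ⟨P, d, hP, hH⟩ :=
      exists_eq_mul_diagonal_mul_inv_of_card_roots_charpoly (M := H) (by simpa using h)
    exact ⟨P, diagonal d, (isUnit_iff_isUnit_det P).mp hP, isDiag_diagonal d, hH⟩
end

section
/- Let H be an n×n real unreduced lower Hessenberg matrix with associated polynomial sequence {q_i}_{0≤i≤n}. Then H is real diagonalizable if and only if all roots of q_n are simple and real. -/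
open Polynomial Matrix

/-!
For `μ : ℝ` put `w(μ) = (q₀(μ), …, q_{n-1}(μ))` (`evalVec n q μ`). The recurrence says that
`(H w(μ))ᵢ = μ w(μ)ᵢ` for `i < n - 1`, while the last row picks up the defect `-q_n(μ)`.
Because the superdiagonal of `H` has no zeros, the first `n - 1` rows of `H x = μ x` determine
`x` from `x₀`, so every eigenvector for `μ` is a multiple of `w(μ)`. Hence the eigenvalues of `H`
are the real roots of `q_n`, each eigenspace is a line, and `H` has `n` linearly independent
eigenvectors iff `q_n`, of degree `n`, has `n` distinct real roots.
-/

lemma realDiagonalizable_iff_exists_eigenvectors {n : ℕ} (A : Matrix (Fin n) (Fin n) ℝ) :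
    RealDiagonalizable A ↔ ∃ (v : Fin n → Fin n → ℝ) (d : Fin n → ℝ),
      LinearIndependent ℝ v ∧ ∀ k, A *ᵥ v k = d k • v k := by
  constructor
  · rintro ⟨P, D, hP, hD, rfl⟩
    have hAP : P * D * P⁻¹ * P = P * diagonal D.diag := by
      rw [nonsing_inv_mul_cancel_right _ _ hP, hD.diagonal_diag]
    refine ⟨P.col, D.diag, linearIndependent_cols_iff_isUnit.2 ((isUnit_iff_isUnit_det P).2 hP),
      fun k => ?_⟩
    funext i
    have h := congrFun₂ hAP i k
    rw [mul_diagonal] at h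
    rw [Pi.smul_apply, smul_eq_mul, col_apply, mul_comm, ← h]
    rfl
  · rintro ⟨v, d, hv, hvd⟩
    set P : Matrix (Fin n) (Fin n) ℝ := (Matrix.of v)ᵀ
    have hP : IsUnit P.det := (isUnit_iff_isUnit_det P).1 (linearIndependent_cols_iff_isUnit.1 hv)
    have hAP : A * P = P * diagonal d := by
      ext i k
      rw [mul_diagonal, mul_comm]
      exact congrFun (hvd k) i
    refine ⟨P, diagonal d, hP, isDiag_diagonal d, ?_⟩
    rw [← hAP, mul_nonsing_inv_cancel_right _ _ hP]

lemma entryR_of_lt {n : ℕ} (H : Matrix (Fin n) (Fin n) ℝ) {i j : ℕ} (hi : i < n) (hj : j < n) :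
    entryR H i j = H ⟨i, hi⟩ ⟨j, hj⟩ :=
  dif_pos ⟨hi, hj⟩

lemma mulVec_apply_eq_sum_range {n : ℕ} (H : Matrix (Fin n) (Fin n) ℝ) (f : ℕ → ℝ) (i : Fin n) :
    (H *ᵥ fun j : Fin n => f j) i = ∑ j ∈ Finset.range n, entryR H i j * f j := by
  rw [← Fin.sum_univ_eq_sum_range (fun j => entryR H i j * f j)]
  simp only [mulVec, dotProduct, entryR_of_lt H i.2 (Fin.is_lt _)]

def evalVec (n : ℕ) (q : ℕ → ℝ[X]) (μ : ℝ) : Fin n → ℝ :=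
  fun i => (q i).eval μ

section AssocPolySeq

variable {n : ℕ} {H : Matrix (Fin n) (Fin n) ℝ} {q : ℕ → ℝ[X]}

lemma IsAssocPolySeq.degree_eq (hH : IsUnreducedLowerHessenberg H) (hq : IsAssocPolySeq H q)
    {i : ℕ} (hi : i ≤ n) : (q i).degree = i := by
  induction i using Nat.strong_induction_on with
  | _ i ih =>
  rcases i with _ | m
  · simp [hq.1]
  have hm : m < n := hi
  have hc : (if m + 1 = n then (1 : ℝ) else entryR H m (m + 1)) ≠ 0 := by
    split_ifs with h
    exacts [one_ne_zero, hH.2 m (by omega)]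
  have hsum : (∑ j ∈ Finset.range (m + 1), C (entryR H m j) * q j).degree <
      ((m + 1 : ℕ) : WithBot ℕ) := by
    refine (degree_sum_le _ _).trans_lt
      ((Finset.sup_lt_iff (WithBot.bot_lt_coe _)).2 fun j hj => ?_)
    have hj : j < m + 1 := Finset.mem_range.1 hj
    calc (C (entryR H m j) * q j).degree ≤ (q j).degree := by
          rw [← smul_eq_C_mul]
          exact degree_smul_le _ _
      _ < (m + 1 : ℕ) := by rw [ih j hj (by omega)]; exact_mod_cast hj
  have hXq : (X * q m).degree = ((m + 1 : ℕ) : WithBot ℕ) := by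
    rw [degree_mul, degree_X, ih m (by omega) hm.le]
    norm_cast
    omega
  rw [← degree_C_mul hc, hq.2 m hm, degree_sub_eq_left_of_degree_lt (hXq ▸ hsum), hXq]

lemma IsAssocPolySeq.mulVec_evalVec_apply (hH : IsUnreducedLowerHessenberg H)
    (hq : IsAssocPolySeq H q) (μ : ℝ) (i : Fin n) :
    (H *ᵥ evalVec n q μ) i = μ * evalVec n q μ i - if (i : ℕ) + 1 = n then (q n).eval μ else 0 := by
  have hrec := congrArg (eval μ) (hq.2 i i.2)
  simp only [eval_mul, eval_C, eval_X, eval_sub, eval_finsetSum] at hrec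
  unfold evalVec
  rw [mulVec_apply_eq_sum_range H (fun j => (q j).eval μ)]
  split_ifs at hrec ⊢ with hlast
  · rw [hlast, one_mul] at hrec
    rw [hrec]
    ring
  · have hlt : (i : ℕ) + 2 ≤ n := by omega
    rw [← Finset.sum_subset (Finset.range_subset_range.2 hlt), Finset.sum_range_succ]
    · linarith
    · intro j _ hj
      rw [hH.1 i j (by simp only [Finset.mem_range, not_lt] at hj; omega), zero_mul]

lemma IsUnreducedLowerHessenberg.eq_zero_of_mulVec_apply_eq (hH : IsUnreducedLowerHessenberg H)
    (hn : 0 < n) {μ : ℝ} {x : Fin n → ℝ}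
    (hx : ∀ i : Fin n, (i : ℕ) + 1 < n → (H *ᵥ x) i = μ * x i) (h0 : x ⟨0, hn⟩ = 0) : x = 0 := by
  suffices h : ∀ k (hk : k < n), x ⟨k, hk⟩ = 0 from funext fun i => h i i.2
  intro k
  induction k using Nat.strong_induction_on with
  | _ k ih =>
  rcases k with _ | k
  · exact fun _ => h0
  intro hk
  have hrow := hx ⟨k, by omega⟩ hk
  rw [ih k (by omega), mul_zero, mulVec, dotProduct, Finset.sum_eq_single ⟨k + 1, hk⟩] at hrow
  · exact (mul_eq_zero.1 hrow).resolve_left (entryR_of_lt H _ hk ▸ hH.2 k hk)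
  · intro j _ hj
    rcases lt_or_gt_of_ne (Fin.val_ne_of_ne hj) with hlt | hgt
    · rw [ih j hlt j.2, mul_zero]
    · rw [← entryR_of_lt H _ j.2, hH.1 k j hgt, zero_mul]
  · simp

lemma IsAssocPolySeq.eq_smul_evalVec_of_mulVec_eq_smul (hH : IsUnreducedLowerHessenberg H)
    (hq : IsAssocPolySeq H q) (hn : 0 < n) {μ : ℝ} {x : Fin n → ℝ} (hx : H *ᵥ x = μ • x) :
    x = x ⟨0, hn⟩ • evalVec n q μ := by
  rw [← sub_eq_zero]
  refine hH.eq_zero_of_mulVec_apply_eq hn (μ := μ) (fun i hi => ?_) ?_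
  · rw [mulVec_sub, mulVec_smul, Pi.sub_apply, hx, Pi.smul_apply, Pi.smul_apply,
      hq.mulVec_evalVec_apply hH μ i, if_neg hi.ne]
    simp only [smul_eq_mul, Pi.sub_apply, Pi.smul_apply, sub_zero]
    ring
  · simp [evalVec, hq.1]

lemma IsAssocPolySeq.mulVec_evalVec_eq_smul_iff (hH : IsUnreducedLowerHessenberg H)
    (hq : IsAssocPolySeq H q) (hn : 0 < n) {μ : ℝ} :
    H *ᵥ evalVec n q μ = μ • evalVec n q μ ↔ (q n).IsRoot μ := by
  constructor
  · intro h
    have hlast := congrFun h ⟨n - 1, by omega⟩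
    rw [hq.mulVec_evalVec_apply hH, if_pos (by simp only; omega)] at hlast
    simpa using hlast
  · intro h
    funext i
    rw [hq.mulVec_evalVec_apply hH, h.eq_zero, ite_self, sub_zero, Pi.smul_apply, smul_eq_mul]

lemma IsAssocPolySeq.isRoot_of_mulVec_eq_smul (hH : IsUnreducedLowerHessenberg H)
    (hq : IsAssocPolySeq H q) {μ : ℝ} {x : Fin n → ℝ} (hx : H *ᵥ x = μ • x) (hx0 : x ≠ 0) :
    (q n).IsRoot μ := by
  have hn : 0 < n := Nat.pos_of_ne_zero fun h => hx0 (by subst h; exact Subsingleton.elim _ _)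
  have hxq := hq.eq_smul_evalVec_of_mulVec_eq_smul hH hn hx
  set c := x ⟨0, hn⟩
  have hc : c ≠ 0 := fun h => hx0 (by rw [hxq, h, zero_smul])
  refine (hq.mulVec_evalVec_eq_smul_iff hH hn).1 (smul_right_injective _ hc ?_)
  dsimp only
  rw [← mulVec_smul, ← hxq, hx, hxq, smul_comm]

lemma IsAssocPolySeq.hasEigenvector_evalVec (hH : IsUnreducedLowerHessenberg H)
    (hq : IsAssocPolySeq H q) (hn : 0 < n) {μ : ℝ} (hμ : (q n).IsRoot μ) :
    Module.End.HasEigenvector (toLin' H) μ (evalVec n q μ) := by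
  refine ⟨Module.End.mem_eigenspace_iff.2 ?_, fun h => ?_⟩
  · rw [toLin'_apply]
    exact (hq.mulVec_evalVec_eq_smul_iff hH hn).2 hμ
  · simpa [evalVec, hq.1] using congrFun h ⟨0, hn⟩

lemma IsAssocPolySeq.injective_of_linearIndependent_eigenvectors
    (hH : IsUnreducedLowerHessenberg H) (hq : IsAssocPolySeq H q) {v : Fin n → Fin n → ℝ}
    {d : Fin n → ℝ} (hv : LinearIndependent ℝ v) (hvd : ∀ k, H *ᵥ v k = d k • v k) :
    Function.Injective d := by
  intro k l hkl
  by_contra hne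
  obtain ⟨a, ha⟩ : ∃ a : ℝ, v k = a • evalVec n q (d k) :=
    ⟨_, hq.eq_smul_evalVec_of_mulVec_eq_smul hH k.pos (hvd k)⟩
  obtain ⟨b, hb⟩ : ∃ b : ℝ, v l = b • evalVec n q (d l) :=
    ⟨_, hq.eq_smul_evalVec_of_mulVec_eq_smul hH l.pos (hvd l)⟩
  have hb0 := ((LinearIndepOn.pair_iff v hne).1 (hv.linearIndepOn _) b (-a) (by
    rw [ha, hb, hkl, smul_smul, smul_smul, neg_mul, mul_comm, neg_smul, add_neg_cancel])).1
  exact hv.ne_zero l (by rw [hb, hb0, zero_smul])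

end AssocPolySeq

/-- an unreduced lower Hessenberg matrix is real diagonalizable iff all
roots of `q n` are simple and real, i.e. iff `q n` (which has degree `n`) has `n`
distinct real roots. -/
theorem realDiagonalizable_iff_qn_simple_real_roots {n : ℕ}
    (H : Matrix (Fin n) (Fin n) ℝ) (hH : IsUnreducedLowerHessenberg H)
    (q : ℕ → Polynomial ℝ) (hq : IsAssocPolySeq H q) :
    RealDiagonalizable H ↔ (q n).roots.toFinset.card = n := by
  have hdeg := hq.degree_eq hH le_rfl
  have hmem : ∀ μ, μ ∈ (q n).roots.toFinset ↔ (q n).IsRoot μ := fun μ => by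
    rw [Multiset.mem_toFinset, mem_roots (ne_zero_of_coe_le_degree hdeg.ge)]
  rw [realDiagonalizable_iff_exists_eigenvectors]
  constructor
  · rintro ⟨v, d, hv, hvd⟩
    refine le_antisymm ?_ ?_
    · calc (q n).roots.toFinset.card ≤ (q n).natDegree :=
            (Multiset.toFinset_card_le _).trans (card_roots' _)
        _ = n := natDegree_eq_of_degree_eq_some hdeg
    · simpa using Finset.card_le_card_of_injOn (s := Finset.univ) d
        (fun k _ => (hmem _).2 (hq.isRoot_of_mulVec_eq_smul hH (hvd k) (hv.ne_zero k)))
        (hq.injective_of_linearIndependent_eigenvectors hH hv hvd).injOn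
  · intro hcard
    set r := (q n).roots.toFinset.orderEmbOfFin hcard
    have hr (k : Fin n) :=
      hq.hasEigenvector_evalVec hH k.pos ((hmem _).1 (Finset.orderEmbOfFin_mem _ hcard k))
    refine ⟨fun k => evalVec n q (r k), r, ?_, fun k => ?_⟩
    · exact Module.End.eigenvectors_linearIndependent' _ r r.injective _ hr
    · simpa using Module.End.mem_eigenspace_iff.1 (hr k).1
end

section
/- Let A be the (N+1)×(N+1) moment-closure coefficient matrix with superdiagonal entries (i+1)/(2i+1), subdiagonal entries i/(2i+1) (for rows 0,...,N-1), last row (a_0,...,a_N), and other entries zero. If the polynomial q_{N+1}(x) = ((N+1)/(2N+1)) P_{N+1}(x) + (N/(2N+1)) P_{N-1}(x) - Σ_{k=0}^{N} a_k P_k(x) has N+1 simple roots, then det(x I - A) = ρ q_{N+1}(x) with ρ = N!/(2N-1)!!. -/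
open Polynomial Matrix

/-- The `n`-th Legendre polynomial, via Rodrigues' formula. -/
noncomputable def legendreP (n : ℕ) : Polynomial ℝ :=
  Polynomial.C (1 / ((2 ^ n * n.factorial : ℕ) : ℝ)) *
    (Polynomial.derivative^[n] ((Polynomial.X ^ 2 - 1) ^ n))

/-- The `(N+1)×(N+1)` moment-closure coefficient matrix: superdiagonal entries
`(i+1)/(2i+1)` and subdiagonal entries `i/(2i+1)` in rows `0,…,N-1`, last row
`(a_0, …, a_N)`, all other entries zero. -/
noncomputable def momentA (N : ℕ) (a : Fin (N + 1) → ℝ) :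
    Matrix (Fin (N + 1)) (Fin (N + 1)) ℝ :=
  fun i j =>
    if (i : ℕ) = N then a j
    else if (j : ℕ) = (i : ℕ) + 1 then (((i : ℕ) : ℝ) + 1) / (2 * ((i : ℕ) : ℝ) + 1)
    else if (i : ℕ) = (j : ℕ) + 1 then ((i : ℕ) : ℝ) / (2 * ((i : ℕ) : ℝ) + 1)
    else 0


lemma L1 (k : ℕ) (f : ℝ[X]) :
    derivative^[k+1] (X * f) =
      X * derivative^[k+1] f + ((k : ℝ[X]) + 1) * derivative^[k] f := by
  induction k generalizing f with
  | zero => simp [derivative_mul]; ring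
  | succ k ih =>
    rw [Function.iterate_succ_apply' derivative (k+1), ih,
      Function.iterate_succ_apply' derivative (k+1),
      Function.iterate_succ_apply' derivative k]
    simp only [derivative_mul, derivative_X, derivative_add, derivative_natCast,
      derivative_one, derivative_ofNat, _root_.map_ofNat]
    push_cast
    ring

lemma L2 (k : ℕ) (f : ℝ[X]) :
    derivative^[k+2] ((X^2 - 1) * f) =
      (X^2 - 1) * derivative^[k+2] f + (2*(k:ℝ[X]) + 4) * X * derivative^[k+1] f
        + ((k:ℝ[X]) + 2) * ((k:ℝ[X]) + 1) * derivative^[k] f := by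
  induction k generalizing f with
  | zero =>
    show derivative^[1+1] ((X^2-1)*f) = (X^2-1) * derivative^[1+1] f
      + (2*((0:ℕ):ℝ[X]) + 4) * X * derivative^[1] f + (((0:ℕ):ℝ[X]) + 2) * (((0:ℕ):ℝ[X]) + 1) * derivative^[0] f
    rw [Function.iterate_succ_apply' derivative 1, Function.iterate_succ_apply' derivative 1,
      Function.iterate_one, Function.iterate_zero_apply]
    simp only [derivative_mul, derivative_sub, derivative_one, derivative_pow, derivative_X,
      _root_.map_ofNat, C_eq_natCast, Nat.cast_ofNat, derivative_ofNat, derivative_natCast,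
      derivative_add, derivative_zero, zero_mul, sub_zero]
    push_cast
    ring
  | succ k ih =>
    rw [Function.iterate_succ_apply' derivative (k+2), ih,
      Function.iterate_succ_apply' derivative (k+2),
      Function.iterate_succ_apply' derivative (k+1),
      Function.iterate_succ_apply' derivative k]
    simp only [derivative_mul, derivative_add, derivative_natCast, derivative_one,
      derivative_X, derivative_pow, _root_.map_ofNat, derivative_sub, derivative_ofNat,
      C_eq_natCast, Nat.cast_ofNat]
    push_cast
    ring

lemma Du (n : ℕ) :
    derivative ((X^2 - 1 : ℝ[X])^(n+1)) = ((2*n+2 : ℕ) : ℝ[X]) * (X * (X^2 - 1)^n) := by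
  rw [derivative_pow]
  simp only [derivative_sub, derivative_one, derivative_pow, derivative_X, C_eq_natCast,
    _root_.map_ofNat, Nat.cast_ofNat, mul_one, one_mul, sub_zero, Nat.add_sub_cancel]
  push_cast
  ring

lemma IdC (k : ℕ) :
    (X^2 - 1 : ℝ[X]) * derivative^[k+2] ((X^2 - 1)^(k+2)) =
      2 * X * derivative^[k+1] ((X^2 - 1)^(k+2))
        + ((k:ℝ[X]) + 4) * ((k:ℝ[X]) + 1) * derivative^[k] ((X^2 - 1)^(k+2)) := by
  have h1 := L2 k ((X^2 - 1 : ℝ[X])^(k+2))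
  have h2 : derivative^[k+2] ((X^2 - 1 : ℝ[X]) * (X^2 - 1)^(k+2)) =
      ((2*(k+2)+2 : ℕ) : ℝ[X]) * (X * derivative^[k+1] ((X^2-1)^(k+2))
        + ((k:ℝ[X]) + 1) * derivative^[k] ((X^2-1)^(k+2))) := by
    have e : (X^2 - 1 : ℝ[X]) * (X^2 - 1)^(k+2) = (X^2-1)^((k+2)+1) := (pow_succ' _ _).symm
    rw [e, show k+2 = (k+1)+1 from rfl, Function.iterate_succ_apply, Du (k+2),
      iterate_derivative_natCast_mul, show (k+1)+1 = k+1+1 from rfl, L1 k]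
  rw [h1] at h2
  push_cast at h2 ⊢
  linear_combination h2

lemma R2conc : derivative^[2] ((X^2 - 1 : ℝ[X])^2) = 12*X^2 - 4 := by
  show derivative (derivative ((X^2 - 1 : ℝ[X])^2)) = _
  simp only [derivative_pow, derivative_sub, derivative_one, derivative_X, derivative_mul,
    derivative_add, C_eq_natCast, Nat.cast_ofNat, derivative_ofNat, derivative_natCast,
    derivative_zero, zero_mul, sub_zero, mul_one, Nat.add_sub_cancel, pow_one, _root_.map_ofNat]
  ring

lemma R3conc : derivative^[3] ((X^2 - 1 : ℝ[X])^3) = 120*X^3 - 72*X := by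
  show derivative (derivative (derivative ((X^2 - 1 : ℝ[X])^3))) = _
  simp only [derivative_pow, derivative_sub, derivative_one, derivative_X, derivative_mul,
    derivative_add, C_eq_natCast, Nat.cast_ofNat, derivative_ofNat, derivative_natCast,
    derivative_zero, zero_mul, sub_zero, mul_one, Nat.add_sub_cancel, _root_.map_ofNat]
  ring_nf

lemma Rrec : ∀ n : ℕ, derivative^[n+2] ((X^2 - 1 : ℝ[X])^(n+2)) =
      2*(2*(n:ℝ[X])+3) * (X * derivative^[n+1] ((X^2-1)^(n+1)))
        - 4*((n:ℝ[X])+1)^2 * derivative^[n] ((X^2-1)^n)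
  | 0 => by
    rw [R2conc]
    norm_num [_root_.map_ofNat]
    ring
  | 1 => by
    rw [R3conc, R2conc]
    norm_num [_root_.map_ofNat]
    ring
  | (k+2) => by
    have h1 : derivative^[k+4] ((X^2 - 1 : ℝ[X])^(k+4)) =
        ((2*(k+3)+2:ℕ):ℝ[X]) * (X * derivative^[k+3] ((X^2-1)^(k+3))
          + ((k:ℝ[X])+3) * derivative^[k+2] ((X^2-1)^(k+3))) := by
      rw [show k+4 = (k+3)+1 from rfl, Function.iterate_succ_apply, Du (k+3),
        iterate_derivative_natCast_mul, show k+3 = (k+2)+1 from rfl, L1 (k+2)]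
      push_cast
      ring
    have h2 : derivative^[k+3] ((X^2 - 1 : ℝ[X])^(k+3)) =
        ((2*(k+2)+2:ℕ):ℝ[X]) * (X * derivative^[k+2] ((X^2-1)^(k+2))
          + ((k:ℝ[X])+2) * derivative^[k+1] ((X^2-1)^(k+2))) := by
      rw [show k+3 = (k+2)+1 from rfl, Function.iterate_succ_apply, Du (k+2),
        iterate_derivative_natCast_mul, show k+2 = (k+1)+1 from rfl, L1 (k+1)]
      push_cast
      ring
    have h3 : derivative^[k+2] ((X^2 - 1 : ℝ[X])^(k+3)) =
        (X^2-1) * derivative^[k+2] ((X^2-1)^(k+2))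
          + (2*(k:ℝ[X])+4) * X * derivative^[k+1] ((X^2-1)^(k+2))
          + ((k:ℝ[X])+2) * ((k:ℝ[X])+1) * derivative^[k] ((X^2-1)^(k+2)) := by
      rw [show (X^2 - 1 : ℝ[X])^(k+3) = (X^2-1) * (X^2-1)^(k+2) from pow_succ' (X^2-1:ℝ[X]) (k+2), L2 k]
    have h4 := IdC k
    push_cast at h1 h2 h3 h4 ⊢
    linear_combination (norm := (push_cast; ring1)) h1 + (-2*((k:ℝ[X])+3)*X) * h2
      + (2*((k:ℝ[X])+4)*((k:ℝ[X])+3)) * h3 + (-2*((k:ℝ[X])+3)*((k:ℝ[X])+2)) * h4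

lemma legendreP_zero : legendreP 0 = 1 := by simp [legendreP]

lemma legendreP_one : legendreP 1 = X := by
  unfold legendreP
  rw [show (1:ℕ) = 0+1 from rfl, Function.iterate_succ_apply, Du 0]
  norm_num
  rw [show ((2:ℝ[X])*X) = C 2 * X by rw [_root_.map_ofNat], ← mul_assoc, ← C_mul]
  norm_num

lemma fact_ne (m : ℕ) : ((2 ^ m * m.factorial : ℕ) : ℝ) ≠ 0 := by
  rw [Nat.cast_ne_zero]
  positivity

lemma cc1 (n : ℕ) : ((n:ℝ)+2) * (1 / ((2 ^ (n+2) * (n+2).factorial : ℕ) : ℝ)) * 2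
    = 1 / ((2 ^ (n+1) * (n+1).factorial : ℕ) : ℝ) := by
  have h1 := fact_ne (n+1)
  have h2 := fact_ne (n+2)
  field_simp
  push_cast [Nat.factorial_succ]
  ring

lemma cc2 (n : ℕ) : (1 / ((2 ^ (n+1) * (n+1).factorial : ℕ) : ℝ)) * ((n:ℝ)+1) * 2
    = 1 / ((2 ^ n * n.factorial : ℕ) : ℝ) := by
  have h1 := fact_ne n
  have h2 := fact_ne (n+1)
  field_simp
  push_cast [Nat.factorial_succ]
  ring

lemma legendre_rec (n : ℕ) :
    ((n:ℝ[X])+2) * legendreP (n+2) =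
      (2*(n:ℝ[X])+3) * (X * legendreP (n+1)) - ((n:ℝ[X])+1) * legendreP n := by
  unfold legendreP
  rw [Rrec n]
  have hc1 := congrArg C (cc1 n)
  have hc2 := congrArg C (cc2 n)
  linear_combination (norm := (simp only [_root_.map_add, _root_.map_mul, _root_.map_ofNat, _root_.map_one, C_eq_natCast]; push_cast; ring1))
    ((2*(n:ℝ[X])+3) * X * derivative^[n+1] ((X^2-1)^(n+1))
        - 2*((n:ℝ[X])+1)^2 * derivative^[n] ((X^2-1)^n)) * hc1
    + (-(((n:ℝ[X])+1) * derivative^[n] ((X^2-1)^n))) * hc2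

lemma legendre_row (i : ℕ) :
    X * legendreP i = C (((i:ℝ)+1)/(2*(i:ℝ)+1)) * legendreP (i+1)
      + C ((i:ℝ)/(2*(i:ℝ)+1)) * legendreP (i-1) := by
  match i with
  | 0 =>
    norm_num
    rw [legendreP_zero, legendreP_one, mul_one]
  | (j+1) =>
    have hne : (2*(j:ℝ)+3) ≠ 0 := by positivity
    have e2 : Polynomial.C (((((j+1:ℕ)):ℝ)+1)/(2*(((j+1:ℕ)):ℝ)+1))
        = C ((j:ℝ)+2) * C ((2*(j:ℝ)+3)⁻¹) := by
      rw [← C_mul]; congr 1; push_cast; ring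
    have e0 : Polynomial.C ((((j+1:ℕ)):ℝ)/(2*(((j+1:ℕ)):ℝ)+1))
        = C ((j:ℝ)+1) * C ((2*(j:ℝ)+3)⁻¹) := by
      rw [← C_mul]; congr 1; push_cast; ring
    have hinv : C ((2*(j:ℝ)+3)⁻¹) * C (2*(j:ℝ)+3) = 1 := by
      rw [← C_mul, inv_mul_cancel₀ hne, _root_.map_one]
    rw [e2, e0, Nat.add_sub_cancel, show j+1+1 = j+2 from rfl]
    linear_combination (norm := (simp only [_root_.map_add, _root_.map_mul, _root_.map_ofNat, _root_.map_one, C_eq_natCast]; push_cast; ring1))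
      (- (C ((2*(j:ℝ)+3)⁻¹))) * legendre_rec j + (-(X*legendreP (j+1))) * hinv

lemma hsum (N : ℕ) (a : Fin (N+1) → ℝ) (i : Fin (N+1)) (hi : (i:ℕ) < N) :
    (∑ j : Fin (N+1), C (momentA N a i j) * legendreP (j:ℕ))
      = C ((((i:ℕ):ℝ)+1)/(2*((i:ℕ):ℝ)+1)) * legendreP ((i:ℕ)+1)
        + C (((i:ℕ):ℝ)/(2*((i:ℕ):ℝ)+1)) * legendreP ((i:ℕ)-1) := by
  have hiN : (i:ℕ) ≠ N := Nat.ne_of_lt hi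
  set β : ℝ := (((i:ℕ):ℝ)+1)/(2*((i:ℕ):ℝ)+1) with hβ
  set γ : ℝ := (((i:ℕ):ℝ))/(2*((i:ℕ):ℝ)+1) with hγ
  have ip : (i:ℕ)+1 < N+1 := by omega
  have split : ∀ j : Fin (N+1), C (momentA N a i j) * legendreP (j:ℕ)
      = (if j = (⟨(i:ℕ)+1, ip⟩ : Fin (N+1)) then C β * legendreP ((i:ℕ)+1) else 0)
        + (if (i:ℕ) = (j:ℕ)+1 then C γ * legendreP ((i:ℕ)-1) else 0) := by
    intro j
    show C (if (i:ℕ) = N then a j else if (j:ℕ) = (i:ℕ)+1 then β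
        else if (i:ℕ) = (j:ℕ)+1 then γ else 0) * legendreP (j:ℕ) = _
    rw [if_neg hiN]
    by_cases h1 : (j:ℕ) = (i:ℕ)+1
    · have hj : j = (⟨(i:ℕ)+1, ip⟩ : Fin (N+1)) := Fin.ext h1
      rw [if_pos h1, if_pos hj, if_neg (by omega), add_zero, h1]
    · have hj : j ≠ (⟨(i:ℕ)+1, ip⟩ : Fin (N+1)) := by
        intro h; exact h1 (by rw [h])
      rw [if_neg h1, if_neg hj, zero_add]
      by_cases h2 : (i:ℕ) = (j:ℕ)+1
      · rw [if_pos h2, if_pos h2, show (j:ℕ) = (i:ℕ)-1 by omega]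
      · rw [if_neg h2, if_neg h2, _root_.map_zero, zero_mul]
  rw [Finset.sum_congr rfl (fun j _ => split j), Finset.sum_add_distrib]
  congr 1
  · rw [Finset.sum_ite_eq' Finset.univ (⟨(i:ℕ)+1, ip⟩ : Fin (N+1))
      (fun _ => C β * legendreP ((i:ℕ)+1)), if_pos (Finset.mem_univ _)]
  · rcases hm : (i:ℕ) with _ | m
    · rw [Finset.sum_eq_zero (fun j _ => by rw [if_neg (by omega)])]
      have : γ = 0 := by rw [hγ, hm]; norm_num
      rw [this, _root_.map_zero, zero_mul]
    · have hmN : m < N+1 := by omega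
      have : ∀ j : Fin (N+1), (if m+1 = (j:ℕ)+1 then C γ * legendreP (m+1-1) else 0)
          = (if j = (⟨m, hmN⟩ : Fin (N+1)) then C γ * legendreP (m+1-1) else 0) := by
        intro j
        refine if_congr ?_ rfl rfl
        constructor
        · intro h; exact Fin.ext (show (j:ℕ) = m by omega)
        · intro h
          have hjm : (j:ℕ) = m := by rw [h]
          omega
      rw [Finset.sum_congr rfl (fun j _ => this j),
        Finset.sum_ite_eq' Finset.univ (⟨m, hmN⟩ : Fin (N+1))
          (fun _ => C γ * legendreP (m+1-1)), if_pos (Finset.mem_univ _)]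

lemma prod_super (N : ℕ) :
    (∏ i ∈ Finset.range N, (((i:ℕ):ℝ)+1)/(2*((i:ℕ):ℝ)+1))
      = (N.factorial : ℝ) / (Nat.doubleFactorial (2*N-1) : ℝ) := by
  induction N with
  | zero => simp
  | succ n ih =>
    rw [Finset.prod_range_succ, ih]
    have hdf : (Nat.doubleFactorial (2*(n+1)-1) : ℝ)
        = (2*(n:ℝ)+1) * (Nat.doubleFactorial (2*n-1) : ℝ) := by
      rcases n with _ | m
      · norm_num [Nat.doubleFactorial]
      · rw [show 2*(m+1+1)-1 = (2*m+1)+2 by omega, Nat.doubleFactorial,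
          show 2*(m+1)-1 = 2*m+1 by omega]
        push_cast; ring
    have hfac : (((n+1).factorial : ℕ) : ℝ) = ((n:ℝ)+1) * (n.factorial : ℝ) := by
      rw [Nat.factorial_succ]; push_cast; ring
    rw [hdf, hfac]
    have h1 : ((Nat.doubleFactorial (2*n-1)):ℝ) ≠ 0 := by
      have := Nat.doubleFactorial_pos (2*n-1)
      positivity
    have h2 : (2*(n:ℝ)+1) ≠ 0 := by positivity
    field_simp

lemma hadj (N : ℕ) (a : Fin (N+1) → ℝ) :
    adjugate (charmatrix (momentA N a)) 0 (Fin.last N)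
      = C (∏ i ∈ Finset.range N, (((i:ℕ):ℝ)+1)/(2*((i:ℕ):ℝ)+1)) := by
  rw [Matrix.adjugate_apply]
  set M' := (charmatrix (momentA N a)).updateRow (Fin.last N) (Pi.single 0 1) with hM'
  rw [Matrix.det_succ_row M' (Fin.last N)]
  rw [Finset.sum_eq_single (0 : Fin (N+1))]
  rotate_left
  · intro j _ hj
    have : M' (Fin.last N) j = 0 := by
      rw [hM', Matrix.updateRow_self]
      exact Pi.single_eq_of_ne hj 1
    rw [this]
    ring
  · intro h; exact absurd (Finset.mem_univ _) h
  have h00 : M' (Fin.last N) 0 = 1 := by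
    rw [hM', Matrix.updateRow_self]; exact Pi.single_eq_same _ _
  rw [h00, mul_one]
  have hcast : ∀ p : Fin N, Fin.castSucc p ≠ Fin.last N := by
    intro p h
    have := congrArg Fin.val h
    simp only [Fin.coe_castSucc, Fin.val_last] at this
    omega
  have hdet : (M'.submatrix (Fin.last N).succAbove (0 : Fin (N+1)).succAbove).det
      = (-1:ℝ[X])^N * C (∏ i ∈ Finset.range N, (((i:ℕ):ℝ)+1)/(2*((i:ℕ):ℝ)+1)) := by
    have htri : (M'.submatrix (Fin.last N).succAbove
        (0 : Fin (N+1)).succAbove).BlockTriangular OrderDual.toDual := by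
      intro p q hpq
      have hpq' : (p:ℕ) < (q:ℕ) := hpq
      simp only [Matrix.submatrix_apply, Fin.succAbove_last, Fin.succAbove_zero]
      rw [hM', Matrix.updateRow_ne (hcast p)]
      rw [charmatrix_apply_ne _ _ _ (by
        intro h
        have := congrArg Fin.val h
        simp only [Fin.coe_castSucc, Fin.val_succ] at this
        omega)]
      have hz : momentA N a (Fin.castSucc p) (Fin.succ q) = 0 := by
        simp only [momentA, Fin.coe_castSucc, Fin.val_succ]
        rw [if_neg (by have := p.isLt; omega), if_neg (by omega), if_neg (by omega)]
      rw [hz, _root_.map_zero, neg_zero]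
    rw [Matrix.det_of_lowerTriangular _ htri]
    have hdiag : ∀ p : Fin N,
        (M'.submatrix (Fin.last N).succAbove (0 : Fin (N+1)).succAbove) p p
          = -C ((((p:ℕ):ℝ)+1)/(2*((p:ℕ):ℝ)+1)) := by
      intro p
      simp only [Matrix.submatrix_apply, Fin.succAbove_last, Fin.succAbove_zero]
      rw [hM', Matrix.updateRow_ne (hcast p)]
      rw [charmatrix_apply_ne _ _ _ (by
        intro h
        have := congrArg Fin.val h
        simp only [Fin.coe_castSucc, Fin.val_succ] at this
        omega)]
      congr 1
      simp only [momentA, Fin.coe_castSucc, Fin.val_succ]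
      rw [if_neg (by have := p.isLt; omega), if_pos trivial]
    rw [Finset.prod_congr rfl (fun p _ => hdiag p)]
    have e : ∀ p : Fin N, -C ((((p:ℕ):ℝ)+1)/(2*((p:ℕ):ℝ)+1))
        = (-1:ℝ[X]) * C ((((p:ℕ):ℝ)+1)/(2*((p:ℕ):ℝ)+1)) := fun p => (neg_one_mul _).symm
    rw [Finset.prod_congr rfl (fun p _ => e p), Finset.prod_mul_distrib,
      Finset.prod_const, Finset.card_univ, Fintype.card_fin]
    congr 1
    rw [← _root_.map_prod]
    congr 1
    exact Fin.prod_univ_eq_prod_range (fun i => (((i:ℕ):ℝ)+1)/(2*((i:ℕ):ℝ)+1)) N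
  rw [hdet, Fin.val_last, Fin.val_zero, add_zero]
  rw [← mul_assoc, ← pow_add]
  rw [Even.neg_one_pow ⟨N, by ring⟩, one_mul]

/-- if
`q_{N+1} = ((N+1)/(2N+1)) P_{N+1} + (N/(2N+1)) P_{N-1} - ∑_{k=0}^N a_k P_k`
has `N+1` simple (complex) roots, then `det(x I - A) = ρ q_{N+1}(x)` with
`ρ = N!/(2N-1)!!`. -/
theorem charpoly_of_momentA (N : ℕ) (a : Fin (N + 1) → ℝ)
    (qtop : Polynomial ℝ)
    (hqtop : qtop =
      Polynomial.C (((N : ℝ) + 1) / (2 * (N : ℝ) + 1)) * legendreP (N + 1) +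
        Polynomial.C ((N : ℝ) / (2 * (N : ℝ) + 1)) * legendreP (N - 1) -
        ∑ k : Fin (N + 1), Polynomial.C (a k) * legendreP (k : ℕ))
    (hsimple : ((qtop.map (algebraMap ℝ ℂ)).roots.toFinset.card = N + 1)) :
    Matrix.charpoly (momentA N a) =
      Polynomial.C ((N.factorial : ℝ) / (Nat.doubleFactorial (2 * N - 1) : ℝ)) * qtop := by
  have key : charmatrix (momentA N a) *ᵥ (fun j : Fin (N+1) => legendreP (j:ℕ))
      = Pi.single (Fin.last N) qtop := by
    funext i
    have expand : (charmatrix (momentA N a) *ᵥ (fun j : Fin (N+1) => legendreP (j:ℕ))) i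
        = X * legendreP (i:ℕ) - ∑ j : Fin (N+1), C (momentA N a i j) * legendreP (j:ℕ) := by
      simp only [Matrix.mulVec, dotProduct, charmatrix_apply]
      rw [Finset.sum_congr rfl (fun j _ => sub_mul _ _ _), Finset.sum_sub_distrib]
      congr 1
      rw [Finset.sum_eq_single i]
      · rw [Matrix.diagonal_apply_eq]
      · intro j _ hj
        rw [Matrix.diagonal_apply_ne _ (Ne.symm hj), zero_mul]
      · intro h; exact absurd (Finset.mem_univ _) h
    rw [expand]
    by_cases hi : i = Fin.last N
    · subst hi
      rw [Pi.single_eq_same]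
      have hlast : ∀ j : Fin (N+1), momentA N a (Fin.last N) j = a j := by
        intro j; simp only [momentA, Fin.val_last]; rw [if_pos trivial]
      rw [Finset.sum_congr rfl (fun j _ => by rw [hlast j]), hqtop, Fin.val_last]
      linear_combination legendre_row N
    · have hne : (i:ℕ) ≠ N := by
        intro h; exact hi (Fin.ext (by rw [h, Fin.val_last]))
      have hi' : (i:ℕ) < N := by have := i.isLt; omega
      rw [Pi.single_eq_of_ne hi, hsum N a i hi', sub_eq_zero]
      exact legendre_row (i:ℕ)
  have hC : (Matrix.det (charmatrix (momentA N a)))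
        • (fun j : Fin (N+1) => legendreP (j:ℕ))
      = fun i => adjugate (charmatrix (momentA N a)) i (Fin.last N) * qtop := by
    calc (Matrix.det (charmatrix (momentA N a))) • (fun j : Fin (N+1) => legendreP (j:ℕ))
        = ((Matrix.det (charmatrix (momentA N a))) • (1 : Matrix (Fin (N+1)) (Fin (N+1)) ℝ[X]))
            *ᵥ (fun j : Fin (N+1) => legendreP (j:ℕ)) := by
          rw [Matrix.smul_mulVec, Matrix.one_mulVec]
      _ = (adjugate (charmatrix (momentA N a)) * charmatrix (momentA N a))
            *ᵥ (fun j : Fin (N+1) => legendreP (j:ℕ)) := by rw [Matrix.adjugate_mul]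
      _ = adjugate (charmatrix (momentA N a))
            *ᵥ (charmatrix (momentA N a) *ᵥ (fun j : Fin (N+1) => legendreP (j:ℕ))) :=
          (Matrix.mulVec_mulVec _ _ _).symm
      _ = adjugate (charmatrix (momentA N a)) *ᵥ Pi.single (Fin.last N) qtop := by rw [key]
      _ = fun i => adjugate (charmatrix (momentA N a)) i (Fin.last N) * qtop :=
          Matrix.mulVec_single _ _ _
  have h0 := congrFun hC 0
  simp only [Pi.smul_apply, smul_eq_mul] at h0
  rw [show ((0 : Fin (N+1)):ℕ) = 0 from rfl, legendreP_zero, mul_one] at h0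
  show Matrix.det (charmatrix (momentA N a)) = _
  rw [h0, hadj N a, prod_super N]
end
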